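/- arXiv:math/0311425 — 4 statements merged into one kernel-verified Lean document; each statement's English description precedes it below -/
import Mathlib

section
/- Let q ≥ 1 and m ≥ 1 be natural numbers, and let 1 ≤ s ≤ m−1. Then Σ_{r=1}^{m} (−1)^{m−r} · C(q+m−r−2, m−r) · C(q, r−s) = δ_{s, m−1}, where δ is the Kronecker delta. -/
/-!
Put `n = m - s` and `q = d + 1`. After the shift `r = s + k` the sum is the coefficient of `X ^ n`
in `(1 + X) ^ (d + 1) * (1 + X)⁻¹ ^ d = 1 + X`, because `C(q, k)` and `(-1) ^ j C(d + j - 1, j)` are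
the coefficients of `(1 + X) ^ (d + 1)` and `(1 + X)⁻¹ ^ d`. Since `n ≥ 1`, that coefficient is
`δ_{n, 1}`.
-/

open Finset

namespace PowerSeries

variable {R : Type*} [CommRing R]

theorem coeff_one_add_X_pow (q j : ℕ) : coeff j ((1 + X : R⟦X⟧) ^ q) = q.choose j := by
  rw [← Polynomial.coe_X, ← Polynomial.coe_one, ← Polynomial.coe_add, ← Polynomial.coe_pow,
    Polynomial.coeff_coe, Polynomial.coeff_one_add_X_pow]

-- For `d = 0` the truncated subtraction makes the right side `δ_{k,0}`, the coefficients of `1`.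
theorem coeff_invOneSubPow_val (d k : ℕ) :
    coeff k (invOneSubPow R d).val = (d + k - 1).choose k := by
  cases d with
  | zero => cases k <;> simp [invOneSubPow_zero, coeff_one]
  | succ d => simp [invOneSubPow_val_succ_eq_mk_add_choose, Nat.choose_symm_add]

theorem one_add_X_pow_succ_mul_rescale_invOneSubPow (d : ℕ) :
    (1 + X : R⟦X⟧) ^ (d + 1) * rescale (-1) (invOneSubPow R d).val = 1 + X := by
  have h : (1 + X : R⟦X⟧) = rescale (-1) (1 - X) := by simp [sub_eq_add_neg]
  rw [h, ← map_pow, ← map_mul, add_comm d, one_sub_pow_add_mul_invOneSubPow_val_eq_one_sub_pow,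
    pow_one]

theorem sum_antidiagonal_choose_mul_neg_one_pow_mul_choose (d n : ℕ) :
    ∑ p ∈ antidiagonal n, ((d + 1).choose p.1 * ((-1) ^ p.2 * (d + p.2 - 1).choose p.2) : R) =
      coeff n (1 + X : R⟦X⟧) := by
  rw [← one_add_X_pow_succ_mul_rescale_invOneSubPow d, coeff_mul]
  simp only [coeff_one_add_X_pow, coeff_rescale, coeff_invOneSubPow_val]

end PowerSeries

theorem alternating_binomial_sum_eq_delta_general (q m s : ℕ) (hq : 1 ≤ q)
    (hs : 1 ≤ s) (hsm : s ≤ m - 1) :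
    ∑ r ∈ Finset.Icc 1 m,
        (-1 : ℤ) ^ (m - r) * ((q + m - r - 2).choose (m - r) : ℤ) *
          (if s ≤ r then (q.choose (r - s) : ℤ) else 0) =
      (if s = m - 1 then 1 else 0) := by
  obtain ⟨d, rfl⟩ : ∃ d, q = d + 1 := ⟨q - 1, by omega⟩
  obtain ⟨n, rfl⟩ : ∃ n, m = s + n := ⟨m - s, by omega⟩
  have hsupport : (Icc 1 (s + n)).filter (s ≤ ·) = Ico s (n + 1 + s) := by
    ext r; simp only [mem_filter, mem_Icc, mem_Ico]; omega
  calc _ = ∑ k ∈ range (n + 1),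
        ((d + 1).choose k * ((-1) ^ (n - k) * (d + (n - k) - 1).choose (n - k)) : ℤ) := by
        simp only [mul_ite, mul_zero]
        rw [← sum_filter, hsupport, sum_Ico_eq_sum_range, add_tsub_cancel_right]
        refine sum_congr rfl fun k hk ↦ ?_
        have hk : k ≤ n := Nat.lt_succ_iff.mp (mem_range.mp hk)
        rw [add_tsub_cancel_left, show s + n - (s + k) = n - k by omega,
          show d + 1 + (s + n) - (s + k) - 2 = d + (n - k) - 1 by omega]
        ring
    _ = PowerSeries.coeff n (1 + PowerSeries.X : PowerSeries ℤ) := by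
        rw [← PowerSeries.sum_antidiagonal_choose_mul_neg_one_pow_mul_choose d,
          Nat.sum_antidiagonal_eq_sum_range_succ_mk]
    _ = _ := by
        simp only [map_add, PowerSeries.coeff_one, PowerSeries.coeff_X]
        split_ifs <;> omega

/-- For natural numbers `q ≥ 1`, `m ≥ 1`, and `1 ≤ s ≤ m - 1`, one has
`∑_{r=1}^{m} (-1)^{m-r} C(q+m-r-2, m-r) C(q, r-s) = δ_{s, m-1}`,
where `C(a, b)` is the usual binomial coefficient (zero if `b > a`, and the term
`C(q, r - s)` is understood to be zero when `r < s`). -/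
theorem alternating_binomial_sum_eq_delta (q m s : ℕ) (hq : 1 ≤ q) (hm : 1 ≤ m)
    (hs : 1 ≤ s) (hsm : s ≤ m - 1) :
    ∑ r ∈ Finset.Icc 1 m,
        (-1 : ℤ) ^ (m - r) * ((q + m - r - 2).choose (m - r) : ℤ) *
          (if s ≤ r then (q.choose (r - s) : ℤ) else 0) =
      (if s = m - 1 then 1 else 0) :=
  alternating_binomial_sum_eq_delta_general q m s hq hs hsm
end

section
/- Let A ∈ SL(n, ℤ). Then for every 0 ≤ r ≤ n, the rank of the kernel of ∧^r A − id equals the rank of the kernel of ∧^{n−r} A − id, as endomorphisms of Λ^r ℤ^n and Λ^{n−r} ℤ^n respectively. -/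
open ExteriorAlgebra

open ExteriorAlgebra

theorem submodule_pow_mono {R A : Type*} [CommSemiring R] [Semiring A] [Algebra R A]
    {M N : Submodule R A} (h : M ≤ N) : ∀ r : ℕ, M ^ r ≤ N ^ r
  | 0 => le_rfl
  | r + 1 => by
      rw [pow_succ, pow_succ]
      exact mul_le_mul' (submodule_pow_mono h r) h

theorem map_exteriorPower_le {R M : Type*} [CommRing R] [AddCommGroup M] [Module R M]
    (f : M →ₗ[R] M) (r : ℕ) :
    Submodule.map (ExteriorAlgebra.map f).toLinearMap (⋀[R]^r M) ≤ ⋀[R]^r M := by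
  have h1 : Submodule.map (ExteriorAlgebra.map f).toLinearMap
      (LinearMap.range (ι R (M := M))) ≤ LinearMap.range (ι R (M := M)) := by
    rw [ι_range_map_map]
    exact LinearMap.map_le_range
  calc Submodule.map (ExteriorAlgebra.map f).toLinearMap
        (LinearMap.range (ι R (M := M)) ^ r)
      = Submodule.map (ExteriorAlgebra.map f).toLinearMap
          (LinearMap.range (ι R (M := M))) ^ r := Submodule.map_pow _ _ _
    _ ≤ LinearMap.range (ι R (M := M)) ^ r := submodule_pow_mono h1 r

/-- The `r`-th exterior power `∧^r f` of an endomorphism `f`, acting on the `r`-th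
exterior power of the module (as a submodule of the exterior algebra). -/
noncomputable def extPow {R M : Type*} [CommRing R] [AddCommGroup M] [Module R M]
    (f : M →ₗ[R] M) (r : ℕ) : Module.End R (⋀[R]^r M) :=
  (ExteriorAlgebra.map f).toLinearMap.restrict
    (fun _ hx => map_exteriorPower_le f r (Submodule.mem_map_of_mem hx))

/-!
The wedge product `⋀^r ℤⁿ × ⋀^(n-r) ℤⁿ → ⋀^n ℤⁿ ≅ ℤ` is a perfect pairing: on the standard bases its
matrix is a signed permutation matrix matching each `r`-subset with its complement. As `det A = 1`,
the pairing is invariant under `∧A`, so it carries the fixed vectors of `∧^(n-r) A` onto the fixed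
functionals of the transpose of `∧^r A`. Over a domain a square matrix and its transpose have
kernels of the same rank, since their ranks agree over the fraction field.
-/

open Module LinearMap
open scoped Matrix

namespace Set.powersetCard

theorem coe_ofFinEmbEquiv_symm_eq_id {N : ℕ} (s : powersetCard (Fin N) N) :
    ⇑(ofFinEmbEquiv.symm s) = id := by
  have hs : s.val = Finset.univ := Finset.eq_univ_of_card _ (by simp)
  have h := Finset.orderEmbOfFin_unique' (s := s.val) s.prop (f := RelEmbedding.refl (· ≤ ·))
    (by simp [hs])
  rw [ofFinEmbEquiv_symm_apply]
  exact (congrArg DFunLike.coe h).symm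

theorem eq_compl_of_disjoint {α : Type*} [Fintype α] [DecidableEq α] {a c : ℕ}
    (hm : a + c = Fintype.card α) {s : powersetCard α a} {t : powersetCard α c}
    (h : Disjoint s.val t.val) : s = compl hm t := by
  refine Subtype.ext (Finset.eq_of_subset_of_card_le
    (Finset.subset_compl_iff_disjoint_right.mpr h) ?_)
  simp [Finset.card_compl]
  omega

end Set.powersetCard

namespace Matrix

variable {R : Type*} [CommRing R] {m n : Type*} [Fintype m] [Fintype n]

theorem rank_map_algebraMap {K : Type*} [Field K] [Algebra R K] [IsFractionRing R K]
    (A : Matrix m n R) : (A.map (algebraMap R K)).rank = A.rank := by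
  let φ : (m → R) →ₗ[R] (m → K) := .pi fun i ↦ Algebra.linearMap R K ∘ₗ .proj i
  have hcol : Set.range (A.map (algebraMap R K)).col = φ '' Set.range A.col := by
    rw [← Set.range_comp]; rfl
  -- the column span over `K` is the localization of the column span over `R`
  rw [rank_eq_finrank_span_cols, rank_eq_finrank_span_cols, hcol,
    ← Submodule.localized'_span K (nonZeroDivisors R) φ,
    IsLocalization.finrank_eq K (nonZeroDivisors R) le_rfl,
    IsLocalizedModule.finrank_eq (nonZeroDivisors R)
      ((Submodule.span R (Set.range A.col)).toLocalized' K _ φ) le_rfl]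

theorem rank_transpose_of_isDomain [IsDomain R] (A : Matrix m n R) : Aᵀ.rank = A.rank := by
  rw [← rank_map_algebraMap (K := FractionRing R), ← rank_map_algebraMap (K := FractionRing R) A,
    transpose_map, rank_transpose]

theorem finrank_ker_toLin_add_rank [IsDomain R] [DecidableEq n] {V W : Type*} [AddCommGroup V]
    [Module R V] [AddCommGroup W] [Module R W] (A : Matrix m n R) (b₁ : Basis n R V)
    (b₂ : Basis m R W) :
    finrank R (ker (toLin b₁ b₂ A)) + A.rank = Fintype.card n := by
  have : Module.Finite R V := .of_basis b₁
  rw [rank_eq_finrank_range_toLin A b₂ b₁, ← finrank_eq_card_basis b₁,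
    ← (toLin b₁ b₂ A).quotKerEquivRange.finrank_eq, add_comm]
  exact Submodule.finrank_quotient_add_finrank _

end Matrix

namespace LinearMap

variable {R V W : Type*} [CommRing R] [AddCommGroup V] [Module R V] [AddCommGroup W] [Module R W]

theorem finrank_ker_dualMap [IsDomain R] [Module.Free R V] [Module.Finite R V] (h : V →ₗ[R] V) :
    finrank R (ker h.dualMap) = finrank R (ker h) := by
  classical
  let b := Module.Free.chooseBasis R V
  have hV := Matrix.finrank_ker_toLin_add_rank (toMatrix b b h) b b
  have hD := Matrix.finrank_ker_toLin_add_rank (toMatrix b b h)ᵀ b.dualBasis b.dualBasis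
  rw [Matrix.toLin_toMatrix] at hV
  rw [Matrix.toLin_transpose, Matrix.toLin_toMatrix, ← dualMap_def,
    Matrix.rank_transpose_of_isDomain] at hD
  omega

theorem dualMap_sub_one (g : V →ₗ[R] V) : (g - 1).dualMap = g.dualMap - 1 := by
  ext φ x
  simp

theorem ker_sub_one_eq_comap_ker_dualMap_sub_one (Φ : W ≃ₗ[R] Dual R V) {f : V →ₗ[R] V}
    {g : W →ₗ[R] W} (hf : Function.Surjective f) (hΦ : ∀ x y, Φ (g y) (f x) = Φ y x) :
    ker (g - 1) = (ker (f.dualMap - 1)).comap Φ.toLinearMap := by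
  ext y
  simp only [Submodule.mem_comap, mem_ker, sub_apply, Module.End.one_apply, sub_eq_zero,
    LinearEquiv.coe_coe]
  constructor
  · intro hy
    ext x
    simpa [hy] using hΦ x y
  · intro hy
    apply Φ.injective
    ext z
    obtain ⟨x, rfl⟩ := hf z
    rw [hΦ]
    exact (DFunLike.congr_fun hy x).symm

theorem finrank_ker_sub_one_eq_dualMap (Φ : W ≃ₗ[R] Dual R V) {f : V →ₗ[R] V}
    {g : W →ₗ[R] W} (hf : Function.Surjective f) (hΦ : ∀ x y, Φ (g y) (f x) = Φ y x) :
    finrank R (ker (g - 1)) = finrank R (ker (f.dualMap - 1)) := by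
  rw [ker_sub_one_eq_comap_ker_dualMap_sub_one Φ hf hΦ, Submodule.comap_equiv_eq_map_symm,
    LinearEquiv.finrank_map_eq]

end LinearMap

section ExteriorPower

variable {R M : Type*} [CommRing R] [AddCommGroup M] [Module R M]

theorem coe_extPow (f : M →ₗ[R] M) (r : ℕ) (x : ⋀[R]^r M) :
    (extPow f r x : ExteriorAlgebra R M) = ExteriorAlgebra.map f x :=
  rfl

theorem extPow_eq_map (f : M →ₗ[R] M) (r : ℕ) : extPow f r = exteriorPower.map r f := by
  refine exteriorPower.linearMap_ext (AlternatingMap.ext fun v ↦ Subtype.ext ?_)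
  simp [coe_extPow]
  rfl

theorem extPow_surjective {f : M →ₗ[R] M} (hf : Function.Surjective f) (r : ℕ) :
    Function.Surjective (extPow f r) := by
  rw [extPow_eq_map]
  exact exteriorPower.map_surjective hf

namespace Module.Basis

variable {n : ℕ} (b : Basis (Fin n) R M)

noncomputable def exteriorVolume : _root_.ExteriorAlgebra R M →ₗ[R] R :=
  liftAlternating (Pi.single n b.det)

theorem exteriorVolume_ιMulti (v : Fin n → M) : b.exteriorVolume (ιMulti R n v) = b.det v := by
  rw [exteriorVolume, liftAlternating_apply_ιMulti, Pi.single_eq_same]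

theorem exteriorVolume_ιMulti_of_ne {k : ℕ} (hk : k ≠ n) (v : Fin k → M) :
    b.exteriorVolume (ιMulti R k v) = 0 := by
  rw [exteriorVolume, liftAlternating_apply_ιMulti, Pi.single_eq_of_ne hk]
  rfl

theorem exteriorVolume_map (f : M →ₗ[R] M) (x : _root_.ExteriorAlgebra R M) :
    b.exteriorVolume (ExteriorAlgebra.map f x) = LinearMap.det f * b.exteriorVolume x := by
  have : b.exteriorVolume ∘ₗ (ExteriorAlgebra.map f).toLinearMap =
      LinearMap.det f • b.exteriorVolume := by
    refine lhom_ext fun k ↦ AlternatingMap.ext fun v ↦ ?_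
    rcases eq_or_ne k n with rfl | hk
    · simp [exteriorVolume_ιMulti, b.det_comp]
    · simp [exteriorVolume_ιMulti_of_ne _ hk]
  exact LinearMap.congr_fun this x

noncomputable def wedgePairing (a c : ℕ) : ⋀[R]^a M →ₗ[R] ⋀[R]^c M →ₗ[R] R :=
  ((LinearMap.mul R (_root_.ExteriorAlgebra R M)).compl₁₂ (⋀[R]^a M).subtype
    (⋀[R]^c M).subtype).compr₂ b.exteriorVolume

variable {a c : ℕ}

theorem wedgePairing_apply (x : ⋀[R]^a M) (y : ⋀[R]^c M) :
    b.wedgePairing a c x y = b.exteriorVolume (x * y) :=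
  rfl

theorem wedgePairing_extPow (f : M →ₗ[R] M) (x : ⋀[R]^a M) (y : ⋀[R]^c M) :
    b.wedgePairing a c (extPow f a x) (extPow f c y) =
      LinearMap.det f * b.wedgePairing a c x y := by
  rw [wedgePairing_apply, wedgePairing_apply, coe_extPow, coe_extPow, ← map_mul,
    exteriorVolume_map]

theorem wedgePairing_exteriorPower_of_not_disjoint {s : Set.powersetCard (Fin n) a}
    {t : Set.powersetCard (Fin n) c} (h : ¬Disjoint s.val t.val) :
    b.wedgePairing a c (b.exteriorPower a s) (b.exteriorPower c t) = 0 := by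
  rw [wedgePairing_apply, ← basis_eq_coe_basis, ← basis_eq_coe_basis,
    basis_mul_of_not_disjoint _ _ _ h, map_zero]

theorem isUnit_wedgePairing_exteriorPower_of_disjoint (hn : a + c = n)
    {s : Set.powersetCard (Fin n) a} {t : Set.powersetCard (Fin n) c}
    (h : Disjoint s.val t.val) :
    IsUnit (b.wedgePairing a c (b.exteriorPower a s) (b.exteriorPower c t)) := by
  subst hn
  rw [wedgePairing_apply, ← basis_eq_coe_basis, ← basis_eq_coe_basis,
    basis_mul_of_disjoint _ _ _ h, basis_apply_powersetCard, Units.smul_def, map_zsmul,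
    exteriorVolume_ιMulti, Set.powersetCard.coe_ofFinEmbEquiv_symm_eq_id, Function.comp_id,
    det_self, zsmul_one]
  exact (Equiv.Perm.sign _).isUnit.map (Int.castRingHom R)

theorem bijective_wedgePairing_flip (hn : a + c = n) :
    Function.Bijective (b.wedgePairing a c).flip := by
  classical
  have hm : a + c = Fintype.card (Fin n) := hn.trans (Fintype.card_fin n).symm
  let e := Set.powersetCard.compl hm
  have hw (t) : IsUnit (b.wedgePairing a c (b.exteriorPower a (e t)) (b.exteriorPower c t)) :=
    b.isUnit_wedgePairing_exteriorPower_of_disjoint hn (by simp [e, disjoint_compl_left])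
  let D := ((b.exteriorPower a).dualBasis.reindex e.symm).isUnitSMul hw
  have hD : (b.wedgePairing a c).flip = (b.exteriorPower c).equiv D (Equiv.refl _) := by
    refine (b.exteriorPower c).ext fun t ↦ (b.exteriorPower a).ext fun s ↦ ?_
    rw [flip_apply, LinearEquiv.coe_coe, equiv_apply, Equiv.refl_apply, isUnitSMul_apply,
      reindex_apply, Equiv.symm_symm, LinearMap.smul_apply, dualBasis_apply_self, smul_eq_mul]
    split_ifs with hst
    · rw [hst, mul_one]
    · rw [mul_zero]
      exact b.wedgePairing_exteriorPower_of_not_disjoint fun hd ↦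
        hst (Set.powersetCard.eq_compl_of_disjoint hm hd)
  rw [hD]
  exact LinearEquiv.bijective _

end Module.Basis

end ExteriorPower

/-- For `A ∈ SL(n, ℤ)` and `0 ≤ r ≤ n`, the rank of the kernel of `∧^r A − id` equals the
rank of the kernel of `∧^{n−r} A − id`, as endomorphisms of `Λ^r ℤ^n` and `Λ^{n−r} ℤ^n`. -/
theorem rank_ker_extPow_sub_id_symm (n : ℕ) (A : Matrix.SpecialLinearGroup (Fin n) ℤ)
    (r : ℕ) (hr : r ≤ n) :
    Module.finrank ℤ
        (LinearMap.ker (extPow (Matrix.toLin' (A : Matrix (Fin n) (Fin n) ℤ)) r - 1)) =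
      Module.finrank ℤ
        (LinearMap.ker
          (extPow (Matrix.toLin' (A : Matrix (Fin n) (Fin n) ℤ)) (n - r) - 1)) := by
  set f := Matrix.toLin' (A : Matrix (Fin n) (Fin n) ℤ)
  have hdet : LinearMap.det f = 1 := by rw [LinearMap.det_toLin']; exact A.2
  have hf : Function.Surjective f := (Matrix.SpecialLinearGroup.toLin' A).surjective
  let b := Pi.basisFun ℤ (Fin n)
  let Φ := LinearEquiv.ofBijective _ (b.bijective_wedgePairing_flip (Nat.add_sub_cancel' hr))
  have hΦ (x y) : Φ (extPow f (n - r) y) (extPow f r x) = Φ y x := by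
    simp [Φ, b.wedgePairing_extPow, hdet]
  rw [← LinearMap.finrank_ker_dualMap, LinearMap.dualMap_sub_one,
    LinearMap.finrank_ker_sub_one_eq_dualMap Φ (extPow_surjective hf r) hΦ]
end

section
/- For all natural numbers n, r, k and all s with 0 ≤ s ≤ r, one has P(n+1, r, k+s) ≥ P(n, r, k), where P(n,r,k) is the number of partitions of k into r distinct positive integers each at most n. -/
/-!
Raising each of the `s` largest elements of a set `S ⊆ {1, …, n}` by one keeps the elements
distinct (the raised ones stay above the others), lands in `{1, …, n + 1}` and increases the sum
by exactly `s` when `s ≤ #S`. The operation is injective: an element of the new set was raised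
iff it is among its `s` largest, because raising preserves the relative order, so the old set
can be read off by lowering those elements again.
-/

/-- `Ppart n r k` is the number of sets of `r` distinct positive integers, each at most
`n`, summing to `k`. -/
def Ppart (n r k : ℕ) : ℕ :=
  ((Finset.powersetCard r (Finset.Icc 1 n)).filter fun S => S.sum id = k).card

namespace Finset

section CountAbove

variable {α : Type*} [LinearOrder α]

/-- On `S` this ranks the elements from the top, starting at `0`. -/
def countAbove (S : Finset α) (x : α) : ℕ := #{y ∈ S | x < y}

lemma countAbove_lt_countAbove {S : Finset α} {x y : α} (hy : y ∈ S) (hxy : x < y) :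
    countAbove S y < countAbove S x := by
  refine card_lt_card ⟨fun z hz => ?_, fun h => ?_⟩
  · rw [mem_filter] at hz ⊢
    exact ⟨hz.1, hxy.trans hz.2⟩
  · exact lt_irrefl y (mem_filter.1 (h (mem_filter.2 ⟨hy, hxy⟩))).2

lemma countAbove_strictAntiOn (S : Finset α) : StrictAntiOn (countAbove S) S :=
  fun _ _ _ hy hxy => countAbove_lt_countAbove hy hxy

lemma countAbove_lt_card {S : Finset α} {x : α} (hx : x ∈ S) : countAbove S x < #S :=
  card_lt_card ⟨filter_subset _ _, fun h => lt_irrefl x (mem_filter.1 (h hx)).2⟩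

lemma image_countAbove (S : Finset α) : S.image (countAbove S) = range #S := by
  refine eq_of_subset_of_card_le (fun m hm => ?_) ?_
  · obtain ⟨x, hx, rfl⟩ := mem_image.1 hm
    exact mem_range.2 (countAbove_lt_card hx)
  · rw [card_range, card_image_of_injOn (countAbove_strictAntiOn S).injOn]

lemma card_filter_countAbove_lt (S : Finset α) (s : ℕ) :
    #{x ∈ S | countAbove S x < s} = min s #S := by
  have hinj := (countAbove_strictAntiOn S).injOn.mono
    (coe_subset.2 (filter_subset (countAbove S · < s) S))
  rw [← card_image_of_injOn hinj,
    ← filter_image (p := (· < s)), image_countAbove, ← card_range (min s #S)]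
  congr 1
  ext m
  simp only [mem_filter, mem_range]
  omega

lemma _root_.StrictMonoOn.countAbove_image {β : Type*} [LinearOrder β] {f : α → β}
    {S : Finset α} (hf : StrictMonoOn f S) {x : α} (hx : x ∈ S) :
    countAbove (S.image f) (f x) = countAbove S x := by
  rw [countAbove, filter_image,
    card_image_of_injOn (hf.injOn.mono (coe_subset.2 (filter_subset _ _)))]
  congr 1
  exact filter_congr fun y hy => hf.lt_iff_lt hx hy

end CountAbove

end Finset

open Finset

def raiseTopElem (s : ℕ) (S : Finset ℕ) (x : ℕ) : ℕ :=
  if countAbove S x < s then x + 1 else x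

def raiseTop (s : ℕ) (S : Finset ℕ) : Finset ℕ := S.image (raiseTopElem s S)

lemma raiseTopElem_strictMonoOn (s : ℕ) (S : Finset ℕ) : StrictMonoOn (raiseTopElem s S) S := by
  intro x _ y hy hxy
  have hcount := countAbove_lt_countAbove hy hxy
  unfold raiseTopElem
  split_ifs <;> omega

lemma card_raiseTop (s : ℕ) (S : Finset ℕ) : #(raiseTop s S) = #S :=
  card_image_of_injOn (raiseTopElem_strictMonoOn s S).injOn

lemma sum_raiseTop (s : ℕ) (S : Finset ℕ) :
    ∑ x ∈ raiseTop s S, x = ∑ x ∈ S, x + min s #S := by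
  rw [raiseTop, sum_image (raiseTopElem_strictMonoOn s S).injOn, ← card_filter_countAbove_lt,
    card_filter, ← sum_add_distrib]
  exact sum_congr rfl fun x _ => by unfold raiseTopElem; split_ifs <;> rfl

lemma raiseTop_subset_Icc {S : Finset ℕ} {a b : ℕ} (s : ℕ) (hS : S ⊆ Icc a b) :
    raiseTop s S ⊆ Icc a (b + 1) := by
  intro y hy
  obtain ⟨x, hx, rfl⟩ := mem_image.1 hy
  have := mem_Icc.1 (hS hx)
  rw [mem_Icc]
  unfold raiseTopElem
  split_ifs <;> omega

lemma raiseTop_injective (s : ℕ) : Function.Injective (raiseTop s) := by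
  let lowerTop (T : Finset ℕ) : Finset ℕ :=
    T.image fun y => if countAbove T y < s then y - 1 else y
  have hleft : Function.LeftInverse lowerTop (raiseTop s) := by
    intro S
    simp only [lowerTop, raiseTop, image_image]
    refine (image_congr fun x hx => ?_).trans image_id
    simp only [Function.comp_apply, (raiseTopElem_strictMonoOn s S).countAbove_image hx]
    unfold raiseTopElem
    split_ifs <;> simp_all
  exact hleft.injective

/-- For all natural numbers `n, r, k` and all `s` with `0 ≤ s ≤ r`,
`P(n+1, r, k+s) ≥ P(n, r, k)`. -/
theorem Ppart_succ_ge (n r k s : ℕ) (hs : s ≤ r) :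
    Ppart n r k ≤ Ppart (n + 1) r (k + s) := by
  refine card_le_card_of_injOn (raiseTop s) (fun S hS => ?_) (raiseTop_injective s).injOn
  simp only [coe_filter, mem_powersetCard, Set.mem_ofPred_eq, id] at hS ⊢
  obtain ⟨⟨hsub, hcard⟩, hsum⟩ := hS
  refine ⟨⟨raiseTop_subset_Icc s hsub, by rw [card_raiseTop, hcard]⟩, ?_⟩
  rw [sum_raiseTop, hsum, hcard, min_eq_left hs]
end

section
/- Let S_n be the n×n upper triangular integer matrix with 1's on the diagonal and 1's on the superdiagonal (S_n e_i = e_{i−1} + e_i with e_0 = 0). Define a_{n,r} as the rank of the kernel of ∧^r S_n − I acting on Λ^r ℤ^n, and a_n = Σ_{r=0}^{n} a_{n,r}. Then a_n is strictly increasing in n: a_{n+1} > a_n for all n ≥ 1. -/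
/-- `a_{n,r} = P(n, r, ⌊r(n+1)/2⌋)`, the rank of the kernel of `∧^r S_n − I` on
`Λ^r ℤ^n`, taking the partition formula as the definition. -/
def aRank (n r : ℕ) : ℕ := Ppart n r (r * (n + 1) / 2)

/-- `a_n = ∑_{r=0}^{n} a_{n,r}`, the common rank of the `K`-groups of `𝒜_{n,θ}`. -/
def a (n : ℕ) : ℕ := ∑ r ∈ Finset.range (n + 1), aRank n r

/-!
Adding `1` to the `d` largest elements of an `r`-set `S ⊆ [1, n]` (`d ≤ r`) gives an `r`-set
`⊆ [1, n + 1]` whose sum is larger by `d`, and `S` is recovered by subtracting `1` from the `d`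
largest elements of the result. Hence `P(n, r, k) ≤ P(n + 1, r, k + d)`; since
`⌊r(n + 2)/2⌋ - ⌊r(n + 1)/2⌋ ≤ r`, this gives `a_{n,r} ≤ a_{n+1,r}` for every `r ≤ n`, and the
extra term `a_{n+1,n+1}` counts `{1, …, n + 1}` itself.
-/

open Finset

def topRank (S : Finset ℕ) (x : ℕ) : ℕ := #{y ∈ S | x ≤ y}

def bumpTop (S : Finset ℕ) (d x : ℕ) : ℕ := if topRank S x ≤ d then x + 1 else x

def unbumpTop (T : Finset ℕ) (d t : ℕ) : ℕ := if topRank T t ≤ d then t - 1 else t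

def bumpTopSet (S : Finset ℕ) (d : ℕ) : Finset ℕ := S.image (bumpTop S d)

variable {S : Finset ℕ} {d x : ℕ}

theorem topRank_lt_topRank {y : ℕ} (hx : x ∈ S) (hxy : x < y) : topRank S y < topRank S x := by
  refine card_lt_card (ssubset_iff_of_subset ?_ |>.2 ⟨x, ?_, ?_⟩)
  · exact monotone_filter_right S fun _ _ => hxy.le.trans
  · simp [hx]
  · simp [hxy]

theorem strictAntiOn_topRank (S : Finset ℕ) : StrictAntiOn (topRank S) S :=
  fun _ hx _ _ hxy => topRank_lt_topRank hx hxy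

theorem image_topRank (S : Finset ℕ) : S.image (topRank S) = Icc 1 #S := by
  refine eq_of_subset_of_card_le (fun m hm => ?_) ?_
  · obtain ⟨x, hx, rfl⟩ := mem_image.1 hm
    exact mem_Icc.2 ⟨card_pos.2 ⟨x, by simp [hx]⟩, card_filter_le _ _⟩
  · rw [Nat.card_Icc, card_image_of_injOn (strictAntiOn_topRank S).injOn]
    omega

theorem card_filter_topRank_le (hd : d ≤ #S) : #{x ∈ S | topRank S x ≤ d} = d := by
  have hinj : Set.InjOn (topRank S) ↑({x ∈ S | topRank S x ≤ d} : Finset ℕ) :=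
    (strictAntiOn_topRank S).injOn.mono (coe_subset.2 (filter_subset _ _))
  have hIcc : {m ∈ Icc 1 #S | m ≤ d} = Icc 1 d := by
    ext m
    simp only [mem_filter, mem_Icc]
    omega
  rw [← card_image_of_injOn hinj, ← filter_image (p := (· ≤ d)), image_topRank, hIcc,
    Nat.card_Icc]
  omega

theorem strictMonoOn_bumpTop (S : Finset ℕ) (d : ℕ) : StrictMonoOn (bumpTop S d) S := by
  intro x hx y _ hxy
  have := topRank_lt_topRank hx hxy
  unfold bumpTop
  split_ifs <;> omega

theorem topRank_bumpTopSet (hx : x ∈ S) :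
    topRank (bumpTopSet S d) (bumpTop S d x) = topRank S x := by
  have hmono := strictMonoOn_bumpTop S d
  rw [topRank, bumpTopSet, filter_image,
    card_image_of_injOn (hmono.injOn.mono (coe_subset.2 (filter_subset _ _)))]
  congr 1
  exact filter_congr fun y hy => hmono.le_iff_le hx hy

theorem image_unbumpTop_bumpTopSet (S : Finset ℕ) (d : ℕ) :
    (bumpTopSet S d).image (unbumpTop (bumpTopSet S d) d) = S := by
  calc (bumpTopSet S d).image (unbumpTop (bumpTopSet S d) d)
      = S.image (unbumpTop (bumpTopSet S d) d ∘ bumpTop S d) := image_image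
    _ = S.image id := image_congr fun x hx => by
        rw [Function.comp_apply, unbumpTop, topRank_bumpTopSet (mem_coe.1 hx), bumpTop]
        split_ifs <;> simp
    _ = S := image_id

theorem bumpTopSet_injective (d : ℕ) : Function.Injective (bumpTopSet · d) := by
  intro S T h
  simpa only [image_unbumpTop_bumpTopSet] using congrArg (fun U => U.image (unbumpTop U d)) h

theorem card_bumpTopSet (S : Finset ℕ) (d : ℕ) : #(bumpTopSet S d) = #S :=
  card_image_of_injOn (strictMonoOn_bumpTop S d).injOn

theorem sum_bumpTopSet (hd : d ≤ #S) : ∑ x ∈ bumpTopSet S d, x = ∑ x ∈ S, x + d := by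
  have : ∀ x ∈ S, bumpTop S d x = x + if topRank S x ≤ d then 1 else 0 := by
    intro x _; unfold bumpTop; split_ifs <;> rfl
  rw [bumpTopSet, sum_image (strictMonoOn_bumpTop S d).injOn, sum_congr rfl this,
    sum_add_distrib, sum_boole, card_filter_topRank_le hd]
  simp

theorem bumpTopSet_subset_Icc {n : ℕ} (h : S ⊆ Icc 1 n) : bumpTopSet S d ⊆ Icc 1 (n + 1) := by
  intro t ht
  obtain ⟨x, hx, rfl⟩ := mem_image.1 ht
  have := mem_Icc.1 (h hx)
  unfold bumpTop
  split_ifs <;> simp only [mem_Icc] <;> omega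

theorem Ppart_le_Ppart_succ_add {n r k d : ℕ} (hd : d ≤ r) :
    Ppart n r k ≤ Ppart (n + 1) r (k + d) := by
  refine card_le_card_of_injOn (bumpTopSet · d) (fun S hS => ?_) (bumpTopSet_injective d).injOn
  simp only [coe_filter, mem_powersetCard, id] at hS ⊢
  obtain ⟨⟨hsub, rfl⟩, rfl⟩ := hS
  exact ⟨⟨bumpTopSet_subset_Icc hsub, card_bumpTopSet S d⟩, sum_bumpTopSet hd⟩

theorem aRank_le_aRank_succ (n r : ℕ) : aRank n r ≤ aRank (n + 1) r := by
  obtain ⟨d, hd, hk⟩ : ∃ d ≤ r, r * (n + 1 + 1) / 2 = r * (n + 1) / 2 + d := by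
    have : r * (n + 1 + 1) = r * (n + 1) + r := by ring
    exact ⟨r * (n + 1 + 1) / 2 - r * (n + 1) / 2, by omega, by omega⟩
  rw [aRank, aRank, hk]
  exact Ppart_le_Ppart_succ_add hd

theorem sum_Icc_one_id (n : ℕ) : ∑ i ∈ Icc 1 n, i = n * (n + 1) / 2 := by
  have hrange : range (n + 1) = insert 0 (Icc 1 n) := by
    ext i
    simp only [mem_range, mem_insert, mem_Icc]
    omega
  have := sum_range_id (n + 1)
  rw [hrange, sum_insert (by simp), zero_add, Nat.add_sub_cancel, mul_comm] at this
  exact this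

theorem aRank_self_pos (n : ℕ) : 0 < aRank n n :=
  card_pos.2 ⟨Icc 1 n, mem_filter.2 ⟨mem_powersetCard.2 ⟨subset_refl _, Nat.card_Icc 1 n⟩,
    sum_Icc_one_id n⟩⟩

theorem a_strictly_increasing_general (n : ℕ) : a n < a (n + 1) := by
  calc a n ≤ ∑ r ∈ range (n + 1), aRank (n + 1) r :=
        sum_le_sum fun r _ => aRank_le_aRank_succ n r
    _ < a (n + 1) := by
      rw [a, sum_range_succ _ (n + 1)]
      exact Nat.lt_add_of_pos_right (aRank_self_pos (n + 1))

/-- The sequence `a_n` is strictly increasing: `a_{n+1} > a_n` for all `n ≥ 1`. -/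
theorem a_strictly_increasing (n : ℕ) (hn : 1 ≤ n) : a n < a (n + 1) :=
  a_strictly_increasing_general n
end
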